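/- Let E be a real normed vector space, I a finite index set, f : E → ℝ and g_i : E → ℝ (i ∈ I) functions differentiable at a point p ∈ E, λ : I → ℝ, and μ > 0. Then the augmented Lagrangian L_A(·, λ, μ) = f + Σ_{i∈I} ψ(g_i(·), λ_i, μ) is differentiable at p, and its Fréchet derivative satisfies D L_A(p) = D f(p) − Σ_{i∈I} max(λ_i − g_i(p)/μ, 0) · D g_i(p); i.e., the gradient of the augmented Lagrangian equals the gradient of the ordinary Lagrangian f − Σ_i λ_i' g_i evaluated with the updated multipliers λ_i' = max(λ_i − g_i(p)/μ, 0) of the multiplier update rule. -/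

import Mathlib

/-- The augmented Lagrangian penalty function:
`ψ(γ, σ, μ) = -σγ + γ²/(2μ)` if `γ - μσ ≤ 0`, and `-(μ/2)σ²` otherwise. -/
noncomputable def psi (γ σ μ : ℝ) : ℝ :=
  if γ - μ * σ ≤ 0 then -σ * γ + γ ^ 2 / (2 * μ) else -(μ / 2) * σ ^ 2

/-!
The penalty is `ψ(γ, σ, μ) = min(γ - μσ, 0)² / (2μ) - μσ²/2`, and `t ↦ min(t, 0)²` is
differentiable with derivative `2 min(t, 0)`, including at the kink `t = 0`, where both one-sided
derivatives vanish. By the chain rule `∂ψ/∂γ = min(γ - μσ, 0)/μ = -max(σ - γ/μ, 0)`, which is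
minus the updated multiplier.
-/

open Set Topology in
theorem hasDerivAt_sq_min_zero (x : ℝ) :
    HasDerivAt (fun t : ℝ => min t 0 ^ 2) (2 * min x 0) x := by
  rcases lt_trichotomy x 0 with hx | rfl | hx
  · have hsq : (fun t : ℝ => min t 0 ^ 2) =ᶠ[𝓝 x] fun t => t ^ 2 := by
      filter_upwards [eventually_lt_nhds hx] with t ht
      rw [min_eq_left ht.le]
    simpa [min_eq_left hx.le] using (hasDerivAt_pow 2 x).congr_of_eventuallyEq hsq
  · have hleft : HasDerivWithinAt (fun t : ℝ => min t 0 ^ 2) 0 (Iic 0) 0 := by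
      simpa using (hasDerivAt_pow 2 (0 : ℝ)).hasDerivWithinAt.congr_of_mem
        (fun t (ht : t ∈ Iic 0) => by rw [min_eq_left ht]) self_mem_Iic
    have hright : HasDerivWithinAt (fun t : ℝ => min t 0 ^ 2) 0 (Ici 0) 0 :=
      (hasDerivWithinAt_const 0 _ 0).congr_of_mem
        (fun t (ht : t ∈ Ici 0) => by simp [min_eq_right (mem_Ici.mp ht)]) self_mem_Ici
    have hboth := hleft.union hright
    rw [Iic_union_Ici, hasDerivWithinAt_univ] at hboth
    simpa using hboth
  · have hzero : (fun t : ℝ => min t 0 ^ 2) =ᶠ[𝓝 x] fun _ => 0 := by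
      filter_upwards [eventually_gt_nhds hx] with t ht
      simp [min_eq_right ht.le]
    simpa [min_eq_right hx.le] using (hasDerivAt_const x (0 : ℝ)).congr_of_eventuallyEq hzero

theorem psi_eq_sq_min {μ : ℝ} (hμ : μ ≠ 0) (γ σ : ℝ) :
    psi γ σ μ = min (γ - μ * σ) 0 ^ 2 / (2 * μ) - μ * σ ^ 2 / 2 := by
  unfold psi
  split_ifs with h
  · rw [min_eq_left h]
    field_simp
    ring
  · rw [min_eq_right (not_le.mp h).le]
    ring

theorem hasDerivAt_psi {μ : ℝ} (hμ : 0 < μ) (γ σ : ℝ) :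
    HasDerivAt (fun γ => psi γ σ μ) (-max (σ - γ / μ) 0) γ := by
  have hclosed := (((hasDerivAt_sq_min_zero (γ - μ * σ)).comp γ
    ((hasDerivAt_id γ).sub_const (μ * σ))).div_const (2 * μ)).sub_const (μ * σ ^ 2 / 2)
  have hderiv : 2 * min (γ - μ * σ) 0 * 1 / (2 * μ) = -max (σ - γ / μ) 0 := by
    rw [← min_neg_neg, neg_zero, neg_sub, mul_one, mul_div_mul_left _ _ two_ne_zero,
      ← min_div_div_right hμ.le, zero_div, sub_div, mul_div_cancel_left₀ _ hμ.ne']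
  rw [← hderiv]
  exact hclosed.congr_of_eventuallyEq (.of_forall fun γ => psi_eq_sq_min hμ.ne' γ σ)

/-- Let `E` be a real normed vector space, `I` a finite index set, `f` and the `g i`
differentiable at `p ∈ E`, `lam : I → ℝ`, and `μ > 0`. Then the augmented Lagrangian
`L_A(·, λ, μ) = f + ∑ i, ψ(g i ·, λ i, μ)` is differentiable at `p` with Fréchet
derivative `D f(p) - ∑ i, max(λ i - g i p / μ, 0) • D (g i)(p)`, i.e. the derivative of
the ordinary Lagrangian evaluated with the updated multipliers
`λ i' = max(λ i - g i p / μ, 0)` of the multiplier update rule. -/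
theorem augLagrangian_hasFDerivAt {E : Type*} [NormedAddCommGroup E] [NormedSpace ℝ E]
    {I : Type*} [Fintype I] (f : E → ℝ) (g : I → E → ℝ) (p : E)
    (f' : E →L[ℝ] ℝ) (g' : I → E →L[ℝ] ℝ)
    (hf : HasFDerivAt f f' p) (hg : ∀ i, HasFDerivAt (g i) (g' i) p)
    (lam : I → ℝ) (μ : ℝ) (hμ : 0 < μ) :
    HasFDerivAt (fun q : E => f q + ∑ i, psi (g i q) (lam i) μ)
      (f' - ∑ i, (max (lam i - g i p / μ) 0) • g' i) p := by
  have hpenalty : ∀ i ∈ Finset.univ, HasFDerivAt (fun q => psi (g i q) (lam i) μ)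
      ((-max (lam i - g i p / μ) 0) • g' i) p := fun i _ =>
    (hasDerivAt_psi hμ (g i p) (lam i)).comp_hasFDerivAt p (hg i)
  refine (hf.fun_add (HasFDerivAt.fun_sum hpenalty)).congr_fderiv ?_
  rw [sub_eq_add_neg, ← Finset.sum_neg_distrib]
  exact congrArg (f' + ·) <| Finset.sum_congr rfl fun i _ =>
    neg_smul (max (lam i - g i p / μ) 0) (g' i)
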